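/- Let M be a polyform extending module. Then M is H-supplemented if and only if every direct summand of M is H-supplemented. -/

import Mathlib

universe u v

/-- `N` is a small (superfluous) submodule of `M`. -/
def SmallSub (R : Type v) [Ring R] {M : Type u} [AddCommGroup M] [Module R M]
    (N : Submodule R M) : Prop :=
  ∀ X : Submodule R M, N ⊔ X = ⊤ → X = ⊤

/-- `D` is a direct summand of `M`. -/
def IsDirectSummand (R : Type v) [Ring R] {M : Type u} [AddCommGroup M] [Module R M]
    (D : Submodule R M) : Prop :=
  ∃ D' : Submodule R M, IsCompl D D'

/-- `M` is H-supplemented: for every submodule `X` there is a direct summand `D`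
with `(X+D)/D ≪ M/D` and `(X+D)/X ≪ M/X`. -/
def HSupplemented (R : Type v) [Ring R] (M : Type u) [AddCommGroup M] [Module R M] : Prop :=
  ∀ X : Submodule R M, ∃ D : Submodule R M, IsDirectSummand R D ∧
    SmallSub R ((X ⊔ D).map D.mkQ) ∧ SmallSub R ((X ⊔ D).map X.mkQ)

/-- Condition (D3). -/
def CondD3 (R : Type v) [Ring R] (M : Type u) [AddCommGroup M] [Module R M] : Prop :=
  ∀ K L : Submodule R M, IsDirectSummand R K → IsDirectSummand R L → K ⊔ L = ⊤ →
    IsDirectSummand R (K ⊓ L)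

/-- `N` is essential in the submodule `C` (both submodules of `M`, `N ≤ C`). -/
def EssIn (R : Type v) [Ring R] {M : Type u} [AddCommGroup M] [Module R M]
    (N C : Submodule R M) : Prop :=
  N ≤ C ∧ ∀ X : Submodule R M, X ≤ C → N ⊓ X = ⊥ → X = ⊥

/-- `C` is a closed submodule of `M`: it has no proper essential extension in `M`. -/
def ClosedSub (R : Type v) [Ring R] {M : Type u} [AddCommGroup M] [Module R M]
    (C : Submodule R M) : Prop :=
  ∀ X : Submodule R M, EssIn R C X → X = C

/-- `C` is a closure of `N` in `M`. -/
def IsClosure (R : Type v) [Ring R] {M : Type u} [AddCommGroup M] [Module R M]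
    (N C : Submodule R M) : Prop :=
  EssIn R N C ∧ ClosedSub R C

/-- `M` is a UC module: every submodule has a unique closure. -/
def UCModule (R : Type v) [Ring R] (M : Type u) [AddCommGroup M] [Module R M] : Prop :=
  ∀ N : Submodule R M, ∃! C : Submodule R M, IsClosure R N C

/-- `M` is extending: every submodule is essential in a direct summand. -/
def Extending (R : Type v) [Ring R] (M : Type u) [AddCommGroup M] [Module R M] : Prop :=
  ∀ N : Submodule R M, ∃ D : Submodule R M, IsDirectSummand R D ∧ EssIn R N D

/-- `N` is an essential submodule of `M`. -/
def EssentialSub (R : Type v) [Ring R] {M : Type u} [AddCommGroup M] [Module R M]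
    (N : Submodule R M) : Prop :=
  ∀ X : Submodule R M, N ⊓ X = ⊥ → X = ⊥

/-- `N` is a rational (dense) submodule of `M`. -/
def RationalSub (R : Type v) [Ring R] {M : Type u} [AddCommGroup M] [Module R M]
    (N : Submodule R M) : Prop :=
  ∀ X : Submodule R M, N ≤ X → ∀ f : ↥X →ₗ[R] M, (∀ x : ↥X, (x : M) ∈ N → f x = 0) → f = 0

/-- `M` is polyform: every essential submodule is rational. -/
def Polyform (R : Type v) [Ring R] (M : Type u) [AddCommGroup M] [Module R M] : Prop :=
  ∀ N : Submodule R M, EssentialSub R N → RationalSub R N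

/-!
An H-supplemented module is one in which every submodule `X` has a direct summand `D` with
`X + T = M ↔ D + T = M` for all `T`. Given a summand `D` with complement `D'` and `X ≤ D`,
take such a summand `E` for `X + D'`; then `E + D = M`, and `E ∩ D`, viewed inside `D`,
does the job for `X` as soon as it is a direct summand, which is condition (D3).

In a polyform extending module any intersection `K ∩ L` of summands is a summand: it is
essential in a summand `C` with complement `C'`, and the map `M → C → M/K` vanishes on the
essential, hence rational, submodule `(K ∩ L) + C'`, so it is zero and `C ≤ K`; likewise
`C ≤ L`, so `C = K ∩ L`.
-/

section ModularLattice

variable {α : Type*} [Lattice α] [BoundedOrder α] [IsModularLattice α]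

theorem IsCompl.sup_eq_iff_sup_sup_eq_top {D D' X T : α} (hD : IsCompl D D') (hX : X ≤ D)
    (hT : T ≤ D) : X ⊔ T = D ↔ X ⊔ D' ⊔ T = ⊤ := by
  constructor
  · intro h
    rw [sup_right_comm, h, hD.sup_eq_top]
  · intro h
    calc X ⊔ T = X ⊔ T ⊔ D' ⊓ D := by rw [hD.symm.inf_eq_bot, sup_bot_eq]
      _ = (X ⊔ T ⊔ D') ⊓ D := (sup_inf_assoc_of_le D' (sup_le hX hT)).symm
      _ = D := by rw [sup_right_comm, h, top_inf_eq]

theorem inf_sup_eq_right_iff_sup_eq_top {D E T : α} (hED : E ⊔ D = ⊤) (hT : T ≤ D) :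
    E ⊓ D ⊔ T = D ↔ E ⊔ T = ⊤ := by
  constructor
  · intro h
    calc E ⊔ T = E ⊔ (E ⊓ D ⊔ T) := by rw [← sup_assoc, sup_inf_self]
      _ = ⊤ := by rw [h, hED]
  · intro h
    rw [sup_comm, ← sup_inf_assoc_of_le E hT, sup_comm, h, top_inf_eq]

end ModularLattice

section

variable {R : Type v} [Ring R] {M : Type u} [AddCommGroup M] [Module R M]

open Submodule

theorem smallSub_map_mkQ_iff (A B : Submodule R M) :
    SmallSub R ((A ⊔ B).map B.mkQ) ↔
      ∀ T : Submodule R M, A ⊔ T = ⊤ → B ⊔ T = ⊤ := by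
  constructor
  · intro hsmall T hAT
    rw [← map_mkQ_eq_top]
    refine hsmall _ ?_
    rw [← Submodule.map_sup, map_mkQ_eq_top, eq_top_iff, ← hAT]
    exact le_sup_of_le_right (sup_le_sup_right le_sup_left T)
  · intro h X hX
    obtain ⟨T, rfl⟩ : ∃ T : Submodule R M, T.map B.mkQ = X :=
      ⟨_, map_comap_eq_of_surjective B.mkQ_surjective X⟩
    rw [← Submodule.map_sup, map_mkQ_eq_top] at hX
    rw [map_mkQ_eq_top]
    have hAT : A ⊔ (B ⊔ T) = ⊤ := by
      rw [← hX]; ac_rfl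
    simpa using h _ hAT

theorem hSupplemented_iff : HSupplemented R M ↔
    ∀ X : Submodule R M, ∃ D : Submodule R M, IsDirectSummand R D ∧
      ∀ T : Submodule R M, X ⊔ T = ⊤ ↔ D ⊔ T = ⊤ := by
  refine forall_congr' fun X => exists_congr fun D => and_congr_right fun _ => ?_
  rw [smallSub_map_mkQ_iff, sup_comm X D, smallSub_map_mkQ_iff, ← forall_and]
  exact forall_congr' fun T => iff_iff_implies_and_implies.symm

theorem HSupplemented.of_linearEquiv {N : Type*} [AddCommGroup N] [Module R N] (e : M ≃ₗ[R] N)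
    (h : HSupplemented R M) : HSupplemented R N := by
  rw [hSupplemented_iff] at h ⊢
  set o := orderIsoMapComap e
  have sup_eq_top (A B : Submodule R N) : o.symm A ⊔ o.symm B = ⊤ ↔ A ⊔ B = ⊤ := by
    rw [← o.symm.map_sup, map_eq_top_iff]
  intro X
  obtain ⟨D, ⟨D', hD⟩, hiff⟩ := h (o.symm X)
  refine ⟨o D, ⟨o D', o.isCompl_iff.mp hD⟩, fun T => ?_⟩
  rw [← sup_eq_top, ← sup_eq_top, o.symm_apply_apply]
  exact hiff _

theorem sup_eq_top_iff_map_subtype {D : Submodule R M} (A B : Submodule R D) :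
    A ⊔ B = ⊤ ↔ A.map D.subtype ⊔ B.map D.subtype = D := by
  rw [← Submodule.map_sup, ← (map_injective_of_injective D.injective_subtype).eq_iff,
    map_subtype_top]

theorem IsDirectSummand.comap_subtype {D F : Submodule R M} (hF : IsDirectSummand R F)
    (hFD : F ≤ D) : IsDirectSummand R (F.comap D.subtype) :=
  let ⟨F', hFF'⟩ := hF
  ⟨F'.comap D.subtype, isCompl_comap_subtype_of_isCompl_of_le hFF' hFD⟩

theorem HSupplemented.of_isDirectSummand (hD3 : CondD3 R M) (hH : HSupplemented R M)
    {D : Submodule R M} (hD : IsDirectSummand R D) : HSupplemented R D := by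
  rw [hSupplemented_iff] at hH ⊢
  obtain ⟨D', hDD'⟩ := hD
  intro X
  obtain ⟨E, hE, hEiff⟩ := hH (X.map D.subtype ⊔ D')
  have hED : E ⊔ D = ⊤ := (hEiff D).mp <| by
    rw [sup_assoc, sup_comm D', hDD'.sup_eq_top, sup_top_eq]
  refine ⟨(E ⊓ D).comap D.subtype, (hD3 E D hE ⟨D', hDD'⟩ hED).comap_subtype inf_le_right,
    fun T => ?_⟩
  rw [sup_eq_top_iff_map_subtype, sup_eq_top_iff_map_subtype, map_comap_subtype,
    inf_eq_right.mpr inf_le_right, hDD'.sup_eq_iff_sup_sup_eq_top (map_subtype_le D X)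
    (map_subtype_le D T), inf_sup_eq_right_iff_sup_eq_top hED (map_subtype_le D T)]
  exact hEiff _

theorem RationalSub.eq_zero {N : Submodule R M} (hN : RationalSub R N) (f : M →ₗ[R] M)
    (hf : ∀ x ∈ N, f x = 0) : f = 0 := by
  have h := hN ⊤ le_top (f ∘ₗ (⊤ : Submodule R M).subtype) fun x hx => hf x hx
  ext x
  exact LinearMap.congr_fun h ⟨x, mem_top⟩

theorem EssIn.essentialSub_sup {A C C' : Submodule R M} (hAC : EssIn R A C) (hC : IsCompl C C') :
    EssentialSub R (A ⊔ C') := by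
  intro U hU
  have hAU : A ⊓ U.map (C.projection C' hC) = ⊥ := by
    rw [eq_bot_iff]
    rintro _ ⟨hxA, u, hu, rfl⟩
    have huAC' : u ∈ A ⊔ C' := by
      rw [← add_sub_cancel (C.projection C' hC u) u]
      exact add_mem_sup hxA (sub_projection_mem hC u)
    have : u ∈ (A ⊔ C') ⊓ U := ⟨huAC', hu⟩
    rw [hU, mem_bot] at this
    simp [this]
  have hUC' : U ≤ C' := by
    rw [← ker_projection hC, LinearMap.le_ker_iff_map]
    exact hAC.2 _ ((LinearMap.map_le_range).trans (range_projection hC).le) hAU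
  rw [← hU]
  exact (inf_eq_right.mpr (hUC'.trans le_sup_right)).symm

theorem Polyform.le_of_essIn (hpoly : Polyform R M) {A C C' K : Submodule R M} (hAK : A ≤ K)
    (hAC : EssIn R A C) (hC : IsCompl C C') (hK : IsDirectSummand R K) : C ≤ K := by
  obtain ⟨K', hKK'⟩ := hK
  -- project onto `C`, then onto `K'` along `K`: this kills the essential submodule `A ⊕ C'`
  set f := K'.projection K hKK'.symm ∘ₗ C.projection C' hC
  have hf : f = 0 := (hpoly _ (hAC.essentialSub_sup hC)).eq_zero f <| by
    intro x hx
    obtain ⟨a, ha, c, hc, rfl⟩ := mem_sup.mp hx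
    simp [f, projection_apply_of_mem_left hC (hAC.1 ha),
      projection_apply_of_mem_right hKK'.symm (hAK ha), projection_apply_of_mem_right hC hc]
  intro x hx
  simpa [f, projection_apply_of_mem_left hC hx] using LinearMap.congr_fun hf x

theorem Polyform.isDirectSummand_inf (hpoly : Polyform R M) (hext : Extending R M)
    {K L : Submodule R M} (hK : IsDirectSummand R K) (hL : IsDirectSummand R L) :
    IsDirectSummand R (K ⊓ L) := by
  obtain ⟨C, ⟨C', hC⟩, hess⟩ := hext (K ⊓ L)
  have hCKL : C = K ⊓ L := le_antisymm
    (le_inf (hpoly.le_of_essIn inf_le_left hess hC hK) (hpoly.le_of_essIn inf_le_right hess hC hL))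
    hess.1
  exact hCKL ▸ ⟨C', hC⟩

theorem Polyform.condD3 (hpoly : Polyform R M) (hext : Extending R M) : CondD3 R M :=
  fun _ _ hK hL _ => hpoly.isDirectSummand_inf hext hK hL

end

theorem stmt5 {R : Type v} [Ring R] {M : Type u} [AddCommGroup M] [Module R M]
    (hpoly : Polyform R M) (hext : Extending R M) :
    HSupplemented R M ↔
      ∀ D : Submodule R M, IsDirectSummand R D → HSupplemented R ↥D :=
  ⟨fun hH _ hD => hH.of_isDirectSummand (hpoly.condD3 hext) hD,
    fun h => (h ⊤ ⟨⊥, isCompl_top_bot⟩).of_linearEquiv Submodule.topEquiv⟩
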